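/- arXiv:math/0409594 — 3 statements merged into one kernel-verified Lean document; each statement's English description precedes it below -/
import Mathlib

section
/- Let F(x) = ax^4 + bx^3 + cx^2 + dx with a > 0. Let A(y) and B(y) denote the largest and smallest real roots of F(x) = y for y sufficiently large (so F(A(y)) = F(B(y)) = y with A(y) > 0 > B(y)). Then lim_{y → +∞} (A(y) + B(y)) = -b/(2a). -/
/-!
Subtracting `F (B y) = F (A y)` and dividing by `A - B` gives, with `s = A + B`,
`a (A² + B²) (s + b/(2a)) = -(b/2 s² + c s + d)`. Since `A B < 0` we have `s² ≤ A² + B²`, so the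
right-hand side is `O(A² + B²)` and `s` stays bounded; then the right-hand side is bounded while
`A² + B² → ∞` (as `F (A y) = y` and `F` is bounded on compacts, `|A| → ∞`), which forces `s + b/(2a) → 0`.
-/

open Filter Topology Metric

theorem tendsto_cocompact_of_continuous_comp {X Y α : Type*} [TopologicalSpace X]
    [TopologicalSpace Y] {F : X → Y} (hF : Continuous F) {f : α → X} {l : Filter α}
    (h : Tendsto (F ∘ f) l (cocompact Y)) : Tendsto f l (cocompact X) := by
  refine hasBasis_cocompact.tendsto_right_iff.2 fun K hK => ?_
  filter_upwards [hasBasis_cocompact.tendsto_right_iff.1 h _ (hK.image hF)] with t ht hfK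
  exact ht ⟨f t, hfK, rfl⟩

theorem quartic_sub_quartic {a : ℝ} (ha : a ≠ 0) (b c d x y : ℝ) :
    (a * x ^ 4 + b * x ^ 3 + c * x ^ 2 + d * x) - (a * y ^ 4 + b * y ^ 3 + c * y ^ 2 + d * y) =
      (x - y) * (a * (x ^ 2 + y ^ 2) * (x + y + b / (2 * a)) +
        (b / 2 * (x + y) ^ 2 + c * (x + y) + d)) := by
  field_simp
  ring

theorem abs_add_le_of_mul_eq {a b c d s Q : ℝ} (ha : 0 < a) (hQ : 1 ≤ Q) (hsQ : s ^ 2 ≤ Q)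
    (h : a * Q * (s + b / (2 * a)) = -(b / 2 * s ^ 2 + c * s + d)) :
    |s + b / (2 * a)| ≤ (|b| / 2 + |c| + |d|) / a := by
  have hs : |s| ≤ Q := by nlinarith [sq_nonneg (|s| - 1), sq_abs s]
  have hQ0 : 0 < Q := by linarith
  have key : a * Q * |s + b / (2 * a)| ≤ (|b| / 2 + |c| + |d|) * Q :=
    calc a * Q * |s + b / (2 * a)| = |b / 2 * s ^ 2 + c * s + d| := by
          rw [← abs_neg (b / 2 * s ^ 2 + c * s + d), ← h, abs_mul, abs_of_pos (by positivity : 0 < a * Q)]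
      _ ≤ |b / 2 * s ^ 2| + |c * s| + |d| := abs_add_three _ _ _
      _ = |b| / 2 * s ^ 2 + |c| * |s| + |d| := by
          rw [abs_mul, abs_mul, abs_div, abs_two, abs_of_nonneg (sq_nonneg s)]
      _ ≤ (|b| / 2 + |c| + |d|) * Q := by
          nlinarith [abs_nonneg b, abs_nonneg c, abs_nonneg d,
            mul_le_mul_of_nonneg_left hs (abs_nonneg c)]
  rw [le_div_iff₀ ha]
  nlinarith

theorem tendsto_of_mul_eq_quadratic {α : Type*} {l : Filter α} {a b c d : ℝ} (ha : 0 < a)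
    {s Q : α → ℝ} (hQ : Tendsto Q l atTop) (hsQ : ∀ᶠ t in l, s t ^ 2 ≤ Q t)
    (h : ∀ᶠ t in l, a * Q t * (s t + b / (2 * a)) = -(b / 2 * s t ^ 2 + c * s t + d)) :
    Tendsto s l (𝓝 (-b / (2 * a))) := by
  set N : ℝ → ℝ := fun x => b / 2 * x ^ 2 + c * x + d
  have hball : ∀ᶠ t in l, s t ∈ closedBall (-(b / (2 * a))) ((|b| / 2 + |c| + |d|) / a) := by
    filter_upwards [hsQ, h, hQ.eventually_ge_atTop 1] with t hst ht hQt
    rw [mem_closedBall, Real.dist_eq, sub_neg_eq_add]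
    exact abs_add_le_of_mul_eq ha hQt hst ht
  obtain ⟨C, hC⟩ := (isCompact_closedBall _ _).exists_bound_of_continuousOn
    (by fun_prop : Continuous N).continuousOn
  have hN : IsBoundedUnder (· ≤ ·) l ((‖·‖) ∘ fun t => -N (s t)) :=
    ⟨C, eventually_map.2 (hball.mono fun t ht => (norm_neg _).trans_le (hC _ ht))⟩
  have hinv : Tendsto (fun t => (a * Q t)⁻¹) l (𝓝 0) :=
    (hQ.const_mul_atTop ha).inv_tendsto_atTop
  have hshift : Tendsto (fun t => s t + b / (2 * a)) l (𝓝 0) := by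
    refine (hinv.zero_mul_isBoundedUnder_le hN).congr' ?_
    filter_upwards [h, hQ.eventually_gt_atTop 0] with t ht hQt
    rw [← ht, ← mul_assoc, inv_mul_cancel₀ (by positivity), one_mul]
  simpa [neg_div] using hshift.sub_const (b / (2 * a))

/-- For `F x = a x^4 + b x^3 + c x^2 + d x` with `a > 0`, if `A y` and `B y` are the
positive and negative solutions of `F x = y` for large `y`, then `A y + B y → -b/(2a)`. -/
theorem stmt_0 (a b c d : ℝ) (ha : 0 < a)
    (F : ℝ → ℝ) (hF : ∀ x, F x = a * x ^ 4 + b * x ^ 3 + c * x ^ 2 + d * x)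
    (A B : ℝ → ℝ)
    (hAB : ∀ᶠ y in atTop, F (A y) = y ∧ F (B y) = y ∧ 0 < A y ∧ B y < 0) :
    Tendsto (fun y => A y + B y) atTop (nhds (-b / (2 * a))) := by
  have hFc : Continuous F := by
    rw [show F = _ from funext hF]
    fun_prop
  have hA : Tendsto (fun y => A y ^ 2) atTop atTop := by
    have hFA : Tendsto (F ∘ A) atTop (cocompact ℝ) :=
      (tendsto_id.congr' (hAB.mono fun y hy => hy.1.symm)).mono_right atTop_le_cocompact
    simpa [Function.comp_def, Real.norm_eq_abs, sq_abs] using (tendsto_pow_atTop two_ne_zero).comp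
      (tendsto_norm_cocompact_atTop.comp (tendsto_cocompact_of_continuous_comp hFc hFA))
  refine tendsto_of_mul_eq_quadratic (c := c) (d := d) ha
    (tendsto_atTop_mono (fun y => le_add_of_nonneg_right (sq_nonneg (B y))) hA) ?_ ?_
  · filter_upwards [hAB] with y ⟨_, _, hA0, hB0⟩
    nlinarith [mul_neg_of_pos_of_neg hA0 hB0]
  · filter_upwards [hAB] with y ⟨hFA, hFB, hA0, hB0⟩
    have hdiff := quartic_sub_quartic ha.ne' b c d (A y) (B y)
    rw [← hF, ← hF, hFA, hFB, sub_self, eq_comm, mul_eq_zero] at hdiff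
    exact eq_neg_of_add_eq_zero_left (hdiff.resolve_left (sub_pos.2 (hB0.trans hA0)).ne')
end

section
/- For the 4-dimensional Hamiltonian system ẋ = y - F(x), ẏ = -x, ż = w - F'(x) z, ẇ = -z with F(x) = x², the function Φ(x, y, z, w) = (y - x² + 1/2) e^{-2y} has identically vanishing derivative along the vector field; i.e., it is a first integral. -/
open Real

noncomputable def lienardFirstIntegral (x y : ℝ) : ℝ :=
  (y - x ^ 2 + 1 / 2) * exp (-2 * y)

theorem hasDerivAt_lienardFirstIntegral_comp {x y : ℝ → ℝ} {x' y' t : ℝ}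
    (hx : HasDerivAt x x' t) (hy : HasDerivAt y y' t) :
    HasDerivAt (fun s => lienardFirstIntegral (x s) (y s))
      ((y' - 2 * x t * x' - 2 * y' * (y t - x t ^ 2 + 1 / 2)) * exp (-2 * y t)) t := by
  have hpoly : HasDerivAt (fun s => y s - x s ^ 2 + 1 / 2) (y' - 2 * x t * x') t := by
    refine ((hy.sub (hx.pow 2)).add_const (1 / 2 : ℝ)).congr_deriv ?_
    norm_num
  refine (hpoly.mul (hy.const_mul (-2)).exp).congr_deriv ?_
  ring

/-- With `ẏ = -x`, the factor `e^{-2y}` contributes `2x (y - x² + 1/2) = 2x (y - x²) + x`, which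
cancels the rate `-x - 2x (y - x²)` of the polynomial factor; this is where the `1/2` comes from. -/
theorem lienardFirstIntegral_derivative_eq_zero (x y : ℝ) :
    (-x - 2 * x * (y - x ^ 2) - 2 * -x * (y - x ^ 2 + 1 / 2)) * exp (-2 * y) = 0 := by
  ring

theorem stmt_3_general (Φ : ℝ → ℝ → ℝ → ℝ → ℝ)
    (hΦ : ∀ x y z w, Φ x y z w = (y - x ^ 2 + 1 / 2) * Real.exp (-2 * y))
    (x y z w : ℝ → ℝ)
    (hx : ∀ t, HasDerivAt x (y t - (x t) ^ 2) t)
    (hy : ∀ t, HasDerivAt y (-(x t)) t) :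
    ∀ t : ℝ, HasDerivAt (fun s => Φ (x s) (y s) (z s) (w s)) 0 t := by
  intro t
  have hΦ_eq : (fun s => Φ (x s) (y s) (z s) (w s)) =
      fun s => lienardFirstIntegral (x s) (y s) :=
    funext fun s => hΦ _ _ _ _
  rw [hΦ_eq, ← lienardFirstIntegral_derivative_eq_zero (x t) (y t)]
  exact hasDerivAt_lienardFirstIntegral_comp (hx t) (hy t)

/-- For the 4-dimensional system `ẋ = y - x²`, `ẏ = -x`, `ż = w - 2xz`, `ẇ = -z`,
the function `Φ (x, y, z, w) = (y - x² + 1/2) e^{-2y}` is a first integral: its derivative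
along every solution vanishes identically. -/
theorem stmt_3 (Φ : ℝ → ℝ → ℝ → ℝ → ℝ)
    (hΦ : ∀ x y z w, Φ x y z w = (y - x ^ 2 + 1 / 2) * Real.exp (-2 * y))
    (x y z w : ℝ → ℝ)
    (hx : ∀ t, HasDerivAt x (y t - (x t) ^ 2) t)
    (hy : ∀ t, HasDerivAt y (-(x t)) t)
    (hz : ∀ t, HasDerivAt z (w t - 2 * x t * z t) t)
    (hw : ∀ t, HasDerivAt w (-(z t)) t) :
    ∀ t : ℝ, HasDerivAt (fun s => Φ (x s) (y s) (z s) (w s)) 0 t :=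
  stmt_3_general Φ hΦ x y z w hx hy
end

section
/- For a ≠ 0 and ε > 0, the system ẋ = y - x², ẏ = ε(a - x) has no nonconstant periodic orbits. -/
/-!
Put `u = x - a`, `v = y - a²`. Then `u̇ = v - u² - 2au`, `v̇ = -εu`, a Liénard system whose
damping `u² + 2au` splits into the even part `u²` and the odd part `2au`. The even system
`u̇ = v - u²`, `v̇ = -εu` has the first integral `H(u, v) = e^{-2v/ε} (v - u² + ε/2)`, and along
solutions of the full system `Ḣ = 4a u² e^{-2v/ε}`. So `a H` is nondecreasing along every
solution; on a periodic one it must be constant, which forces `u ≡ 0`, hence `x ≡ a` and then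
`y = x² = a²`.
-/

open Real Function

theorem Function.Periodic.eq_of_monotone {α β : Type*} [AddCommGroup α] [LinearOrder α]
    [IsOrderedAddMonoid α] [Archimedean α] [PartialOrder β] {f : α → β} {T : α}
    (hf : Periodic f T) (hT : 0 < T) (hmono : Monotone f) (t : α) : f t = f 0 := by
  obtain ⟨s, hs, hts⟩ := hf.exists_mem_Ico₀ hT t
  rw [hts]
  exact le_antisymm (hf.eq ▸ hmono hs.2.le) (hmono hs.1)

theorem Function.Periodic.hasDerivAt_eq_zero_of_nonneg {f f' : ℝ → ℝ} {T : ℝ}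
    (hf : Periodic f T) (hT : 0 < T) (hderiv : ∀ t, HasDerivAt f (f' t) t)
    (hnonneg : 0 ≤ f') (t : ℝ) : f' t = 0 := by
  have hconst : f = fun _ => f 0 :=
    funext (hf.eq_of_monotone hT (monotone_of_hasDerivAt_nonneg hderiv hnonneg))
  exact (hderiv t).unique (hconst ▸ hasDerivAt_const t (f 0))

noncomputable def evenFirstIntegral (ε u v : ℝ) : ℝ :=
  exp (-2 * v / ε) * (v - u ^ 2 + ε / 2)

theorem hasDerivAt_evenFirstIntegral {ε : ℝ} (hε : ε ≠ 0) {g u v : ℝ → ℝ} {t : ℝ}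
    (hu : HasDerivAt u (v t - u t ^ 2 - g (u t)) t) (hv : HasDerivAt v (-ε * u t) t) :
    HasDerivAt (fun s => evenFirstIntegral ε (u s) (v s))
      (2 * u t * g (u t) * exp (-2 * v t / ε)) t := by
  have hexp : HasDerivAt (fun s => exp (-2 * v s / ε))
      (exp (-2 * v t / ε) * (-2 * (-ε * u t) / ε)) t :=
    ((hv.const_mul (-2)).div_const ε).exp
  have hpoly : HasDerivAt (fun s => v s - u s ^ 2 + ε / 2)
      (-ε * u t - 2 * u t ^ 1 * (v t - u t ^ 2 - g (u t))) t :=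
    (hv.sub (hu.pow 2)).add_const _
  refine (hexp.mul hpoly).congr_deriv ?_
  field_simp
  ring

/-- For `a ≠ 0` and `ε > 0`, the system `ẋ = y - x²`, `ẏ = ε (a - x)` has no nonconstant
periodic orbits: every periodic solution is constant. -/
theorem stmt_11 (a ε : ℝ) (ha : a ≠ 0) (hε : 0 < ε)
    (x y : ℝ → ℝ)
    (hx : ∀ t, HasDerivAt x (y t - (x t) ^ 2) t)
    (hy : ∀ t, HasDerivAt y (ε * (a - x t)) t)
    (T : ℝ) (hT : 0 < T)
    (hper : ∀ t, x (t + T) = x t ∧ y (t + T) = y t) :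
    ∀ t : ℝ, x t = x 0 ∧ y t = y 0 := by
  have hu : ∀ t, HasDerivAt (fun s => x s - a)
      ((y t - a ^ 2) - (x t - a) ^ 2 - 2 * a * (x t - a)) t := fun t =>
    ((hx t).sub_const a).congr_deriv (by ring)
  have hv : ∀ t, HasDerivAt (fun s => y s - a ^ 2) (-ε * (x t - a)) t := fun t =>
    ((hy t).sub_const (a ^ 2)).congr_deriv (by ring)
  have hH : ∀ t, HasDerivAt (fun s => a * evenFirstIntegral ε (x s - a) (y s - a ^ 2))
      (a * (2 * (x t - a) * (2 * a * (x t - a)) * exp (-2 * (y t - a ^ 2) / ε))) t :=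
    fun t =>
      (hasDerivAt_evenFirstIntegral (g := fun u => 2 * a * u) hε.ne' (hu t) (hv t)).const_mul a
  have hHper : Periodic (fun s => a * evenFirstIntegral ε (x s - a) (y s - a ^ 2)) T :=
    fun t => by simp only [(hper t).1, (hper t).2]
  have hHzero := hHper.hasDerivAt_eq_zero_of_nonneg hT hH fun t =>
    (by positivity : 0 ≤ 4 * (a * (x t - a)) ^ 2 * exp (-2 * (y t - a ^ 2) / ε)).trans_eq
      (by ring)
  have hxa : ∀ t, x t = a := fun t => by
    have : a * (x t - a) = 0 := by simpa [ha, (exp_pos _).ne'] using hHzero t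
    simpa [ha, sub_eq_zero] using this
  have hya : ∀ t, y t = a ^ 2 := fun t => by
    have h := (hx t).unique ((funext hxa : x = fun _ => a) ▸ hasDerivAt_const t a)
    rw [hxa t] at h
    linarith
  exact fun t => ⟨(hxa t).trans (hxa 0).symm, (hya t).trans (hya 0).symm⟩
end
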